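/- arXiv:2303.02376 — 5 statements merged into one kernel-verified Lean document; each statement's English description precedes it below -/
import Mathlib

section
/- Let ρ_AB be a bipartite state on A⊗B that is TQ-Q on A, and let V be an isometry from ℂ^{d_A} into ℂ^{d_K}⊗ℂ^{d_A} (a (d_K·d_A)×d_A complex matrix with Vᴴ V = 1). Define the tripartite state τ_{KAB} = (V ⊗ₖ 1_B) ρ_AB (Vᴴ ⊗ₖ 1_B) on K⊗A⊗B. If the marginal τ_K = Tr_{AB}(τ_{KAB}) is invertible (full rank), then τ_{KAB} is TQ-Q with respect to the bipartition K | AB, i.e., no nontrivial pinching on K, tensored with the identity on A⊗B, fixes τ_{KAB}. -/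
open Matrix Kronecker BigOperators
open scoped ComplexOrder

noncomputable def trB {A B : Type*} [Fintype B] (ρ : Matrix (A × B) (A × B) ℂ) :
    Matrix A A ℂ :=
  Matrix.of fun a a' => ∑ b, ρ (a, b) (a', b)

noncomputable def trA {A B : Type*} [Fintype A] (ρ : Matrix (A × B) (A × B) ℂ) :
    Matrix B B ℂ :=
  Matrix.of fun b b' => ∑ a, ρ (a, b) (a, b')

def IsState {A : Type*} [Fintype A] (ρ : Matrix A A ℂ) : Prop :=
  ρ.PosSemidef ∧ ρ.trace = 1

def IsQChannel {m n : Type*} [Fintype m] [DecidableEq m] [Fintype n]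
    (Φ : Matrix m m ℂ → Matrix n n ℂ) : Prop :=
  ∃ (N : ℕ) (K : Fin N → Matrix n m ℂ),
    (∀ X, Φ X = ∑ i, K i * X * (K i)ᴴ) ∧ (∑ i, (K i)ᴴ * K i = 1)

def IsOrthProjFamily {A : Type*} [Fintype A] [DecidableEq A] {N : ℕ}
    (P : Fin N → Matrix A A ℂ) : Prop :=
  (∀ k, (P k).IsHermitian) ∧ (∀ k, P k * P k = P k) ∧
  (∀ j k, j ≠ k → P j * P k = 0) ∧ (∑ k, P k = 1)

def IsTQQ {A B : Type*} [Fintype A] [DecidableEq A] [Fintype B] [DecidableEq B]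
    (ρ : Matrix (A × B) (A × B) ℂ) : Prop :=
  ¬ ∃ (N : ℕ) (P : Fin N → Matrix A A ℂ),
      IsOrthProjFamily P ∧ (∃ j k, j ≠ k ∧ P j ≠ 0 ∧ P k ≠ 0) ∧
      ∑ k, (P k ⊗ₖ (1 : Matrix B B ℂ)) * ρ * (P k ⊗ₖ (1 : Matrix B B ℂ)) = ρ

noncomputable def vnEntropy {A : Type*} [Fintype A] [DecidableEq A]
    (ρ : Matrix A A ℂ) : ℝ :=
  if h : ρ.IsHermitian then -∑ i, (h.eigenvalues i) * Real.log (h.eigenvalues i) else 0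

noncomputable def mutInfo {A B : Type*} [Fintype A] [DecidableEq A] [Fintype B] [DecidableEq B]
    (ρ : Matrix (A × B) (A × B) ℂ) : ℝ :=
  vnEntropy (trB ρ) + vnEntropy (trA ρ) - vnEntropy ρ

def IsUnitalCP {n : Type*} [Fintype n] [DecidableEq n]
    (Φ : Matrix n n ℂ → Matrix n n ℂ) : Prop :=
  ∃ (N : ℕ) (K : Fin N → Matrix n n ℂ),
    (∀ X, Φ X = ∑ i, K i * X * (K i)ᴴ) ∧ (∑ i, K i * (K i)ᴴ = 1)

/-! If a pinching `{P_k}` on `K` fixes `τ`, every `P_k ⊗ 1` commutes with `τ`, so the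
compressions `Q_k = Vᴴ (P_k ⊗ 1) V`, tensored with `1_B`, commute with `ρ`. A Hermitian `Q` on
`A` with `Q ⊗ 1` commuting with a TQ-Q state is scalar: otherwise a spectral projection `E` of `Q`
gives the nontrivial pinching `{E, 1 - E}` fixing `ρ`. Orthogonality of `P_j` and `P_k` forces
`(Q_j ⊗ 1) ρ (Q_k ⊗ 1) = 0`, so one of these scalars vanishes. But `Q_k = 0` means
`(P_k ⊗ 1) τ = 0`, hence `P_k τ_K = 0`, and `P_k = 0` because `τ_K` is invertible. -/

lemma IsIdempotentElem.mul_mul_add_one_sub_mul_mul {R : Type*} [Ring R] {F X : R}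
    (hF : IsIdempotentElem F) (hFX : Commute F X) :
    F * X * F + (1 - F) * X * (1 - F) = X := by
  have hXF : F * X * F = X * F := by rw [hFX.eq, mul_assoc, hF.eq]
  rw [hXF, sub_mul, one_mul, hFX.eq, mul_sub, mul_one, sub_mul, mul_assoc, hF.eq]
  abel

lemma commute_of_sum_mul_mul_eq {R ι : Type*} [Ring R] [Fintype ι] [DecidableEq ι] {P : ι → R}
    (hidem : ∀ k, IsIdempotentElem (P k)) (horth : ∀ j k, j ≠ k → P j * P k = 0) {X : R}
    (hX : ∑ k, P k * X * P k = X) (a : ι) : Commute (P a) X := by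
  have hleft : P a * X = P a * X * P a := by
    conv_lhs => rw [← hX]
    rw [Finset.mul_sum, Finset.sum_eq_single a (fun k _ hk => by
      rw [← mul_assoc, ← mul_assoc, horth a k hk.symm, zero_mul, zero_mul]) (by simp),
      ← mul_assoc, ← mul_assoc, (hidem a).eq]
  have hright : X * P a = P a * X * P a := by
    conv_lhs => rw [← hX]
    rw [Finset.sum_mul, Finset.sum_eq_single a (fun k _ hk => by
      rw [mul_assoc, horth k a hk, mul_zero]) (by simp), mul_assoc, (hidem a).eq]
  exact hleft.trans hright.symm

section Compression
variable {α m n : Type*} [Semiring α] [Fintype m] [Fintype n]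
  {U : Matrix n m α} {W : Matrix m n α} {G : Matrix m m α} {X : Matrix n n α}

lemma commute_mul_mul_of_commute [DecidableEq n] (hUW : U * W = 1)
    (h : Commute G (W * X * U)) : Commute (U * G * W) X := by
  calc U * G * W * X = U * (G * (W * X * U)) * W := by
        simp only [Matrix.mul_assoc, hUW, Matrix.mul_one]
    _ = U * (W * X * U * G) * W := by rw [h.eq]
    _ = X * (U * G * W) := by simp only [← Matrix.mul_assoc, hUW, Matrix.one_mul]

lemma mul_mul_mul_mul_mul_eq_zero_of_commute {G' : Matrix m m α} (h : Commute G (W * X * U))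
    (hGG' : G * G' = 0) : U * G * W * X * (U * G' * W) = 0 := by
  calc U * G * W * X * (U * G' * W) = U * (G * (W * X * U)) * G' * W := by
        simp only [Matrix.mul_assoc]
    _ = 0 := by rw [h.eq]; simp only [Matrix.mul_assoc, hGG', Matrix.mul_zero, Matrix.zero_mul]

end Compression

lemma IsStarProjection.mul_eq_zero_of_conjTranspose_mul_mul_eq_zero {m n : Type*} [Fintype m]
    [Fintype n] {P : Matrix m m ℂ} (hP : IsStarProjection P) {V : Matrix m n ℂ}
    (h : Vᴴ * P * V = 0) : P * V = 0 := by
  have hPH : Pᴴ = P := hP.isSelfAdjoint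
  rw [← conjTranspose_mul_self_eq_zero, conjTranspose_mul, hPH, ← Matrix.mul_assoc,
    Matrix.mul_assoc Vᴴ P P, hP.isIdempotentElem.eq, h]

section Bipartite
variable {A B : Type*} [Fintype A] [DecidableEq A] [Fintype B] [DecidableEq B]

variable (B) in
@[simps]
def kroneckerIncludeLeft : Matrix A A ℂ →⋆ₐ[ℂ] Matrix (A × B) (A × B) ℂ where
  toFun X := X ⊗ₖ 1
  map_one' := one_kronecker_one
  map_mul' X Y := by simpa using mul_kronecker_mul X Y (1 : Matrix B B ℂ) 1
  map_zero' := zero_kronecker _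
  map_add' X Y := add_kronecker X Y 1
  commutes' r := by simp [Algebra.algebraMap_eq_smul_one, smul_kronecker]
  map_star' X := by simp [star_eq_conjTranspose, conjTranspose_kronecker]

lemma continuous_kroneckerIncludeLeft : Continuous (kroneckerIncludeLeft (A := A) B) :=
  LinearMap.continuous_of_finiteDimensional (kroneckerIncludeLeft B).toLinearMap

lemma isOrthProjFamily_pair {E : Matrix A A ℂ} (hE : IsStarProjection E) :
    IsOrthProjFamily ![E, 1 - E] := by
  refine ⟨Fin.forall_fin_two.2 ⟨hE.isSelfAdjoint, hE.one_sub.isSelfAdjoint⟩,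
    Fin.forall_fin_two.2 ⟨hE.isIdempotentElem, hE.one_sub.isIdempotentElem⟩, ?_,
    by simp [Fin.sum_univ_two]⟩
  simp [Fin.forall_fin_two, hE.mul_one_sub_self, hE.one_sub_mul_self]

lemma IsTQQ.eq_zero_or_eq_one_of_commute {ρ : Matrix (A × B) (A × B) ℂ} (hρ : IsTQQ ρ)
    {E : Matrix A A ℂ} (hE : IsStarProjection E) (hEρ : Commute (E ⊗ₖ 1) ρ) :
    E = 0 ∨ E = 1 := by
  by_contra! hE01
  refine hρ ⟨2, ![E, 1 - E], isOrthProjFamily_pair hE,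
    ⟨0, 1, zero_ne_one, hE01.1, sub_ne_zero.2 hE01.2.symm⟩, ?_⟩
  have h1E : (1 - E) ⊗ₖ (1 : Matrix B B ℂ) = 1 - E ⊗ₖ 1 := by
    simpa using map_sub (kroneckerIncludeLeft B) 1 E
  simpa [Fin.sum_univ_two, h1E] using
    (hE.isIdempotentElem.map (kroneckerIncludeLeft B)).mul_mul_add_one_sub_mul_mul hEρ

lemma IsTQQ.exists_eq_smul_one_of_commute {ρ : Matrix (A × B) (A × B) ℂ} (hρ : IsTQQ ρ)
    {Q : Matrix A A ℂ} (hQ : IsSelfAdjoint Q) (hQρ : Commute (Q ⊗ₖ 1) ρ) :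
    ∃ c : ℝ, Q = c • 1 := by
  suffices hsub : (spectrum ℝ Q).Subsingleton by
    obtain ⟨c, hc⟩ : ∃ c, spectrum ℝ Q ⊆ {c} := by
      rcases hsub.eq_empty_or_singleton with h | ⟨c, h⟩
      · exact ⟨0, h ▸ Set.empty_subset _⟩
      · exact ⟨c, h.le⟩
    exact ⟨c, by rw [CFC.eq_algebraMap_of_spectrum_subset_singleton Q c hc,
      Algebra.algebraMap_eq_smul_one]⟩
  intro x hx y hy
  by_contra hxy
  have hcont (f : ℝ → ℝ) : ContinuousOn f (spectrum ℝ Q) :=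
    Q.finite_real_spectrum.continuousOn f
  set f : ℝ → ℝ := fun t => if t = x then 1 else 0
  have hE : IsStarProjection (cfc f Q) := by
    refine ⟨?_, cfc_predicate f Q⟩
    rw [IsIdempotentElem, ← cfc_mul f f Q (hcont f) (hcont f)]
    exact cfc_congr fun t _ => by by_cases t = x <;> simp_all [f]
  have hEρ : Commute (cfc f Q ⊗ₖ 1) ρ := by
    have := (kroneckerIncludeLeft B).map_cfc f Q (hcont f) continuous_kroneckerIncludeLeft hQ
      (hQ.map _)
    simp only [kroneckerIncludeLeft_apply] at this
    rw [this]
    exact hQρ.cfc_real f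
  rcases hρ.eq_zero_or_eq_one_of_commute hE hEρ with h | h
  · rw [← cfc_zero ℝ Q, cfc_eq_cfc_iff_eqOn hQ (hcont f) (hcont 0)] at h
    simpa [f] using h hx
  · rw [← cfc_one ℝ Q, cfc_eq_cfc_iff_eqOn hQ (hcont f) (hcont 1)] at h
    simpa [f, Ne.symm hxy] using h hy
end Bipartite

lemma trB_kronecker_one_mul {K β : Type*} [Fintype K] [Fintype β] [DecidableEq β]
    (M : Matrix K K ℂ) (σ : Matrix (K × β) (K × β) ℂ) :
    trB ((M ⊗ₖ (1 : Matrix β β ℂ)) * σ) = M * trB σ := by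
  ext k k'
  simp only [trB, of_apply, mul_apply, kroneckerMap_apply, one_apply, mul_ite, mul_one, mul_zero,
    ite_mul, zero_mul, Fintype.sum_prod_type, Finset.sum_ite_eq, Finset.mem_univ, ↓reduceIte,
    Finset.mul_sum]
  exact Finset.sum_comm

lemma eq_zero_of_kronecker_one_mul_eq_zero {K β : Type*} [Fintype K] [DecidableEq K] [Fintype β]
    [DecidableEq β] {σ : Matrix (K × β) (K × β) ℂ} (hσ : IsUnit (trB σ))
    {M : Matrix K K ℂ} (h : (M ⊗ₖ (1 : Matrix β β ℂ)) * σ = 0) : M = 0 := by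
  rw [← hσ.mul_left_eq_zero, ← trB_kronecker_one_mul, h]
  ext
  simp [trB]

lemma IsState.ne_zero {n : Type*} [Fintype n] {ρ : Matrix n n ℂ} (hρ : IsState ρ) : ρ ≠ 0 :=
  fun h => by simpa [h] using hρ.2

section IsometricExtension
variable {K A B : Type*} [Fintype K] [Fintype A] [DecidableEq A] [Fintype B] [DecidableEq B]
  (V : Matrix (K × A) A ℂ) (ρ : Matrix (A × B) (A × B) ℂ)

noncomputable def isometricExtension : Matrix (K × (A × B)) (K × (A × B)) ℂ :=
  reindex (Equiv.prodAssoc K A B) (Equiv.prodAssoc K A B)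
    ((V ⊗ₖ (1 : Matrix B B ℂ)) * ρ * (Vᴴ ⊗ₖ (1 : Matrix B B ℂ)))

def compression (M : Matrix K K ℂ) : Matrix A A ℂ := Vᴴ * (M ⊗ₖ (1 : Matrix A A ℂ)) * V

lemma compression_kronecker_one (M : Matrix K K ℂ) :
    compression V M ⊗ₖ (1 : Matrix B B ℂ) =
      (V ⊗ₖ (1 : Matrix B B ℂ))ᴴ * ((M ⊗ₖ (1 : Matrix A A ℂ)) ⊗ₖ (1 : Matrix B B ℂ)) *
        (V ⊗ₖ (1 : Matrix B B ℂ)) := by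
  rw [compression, conjTranspose_kronecker, conjTranspose_one, ← mul_kronecker_mul,
    ← mul_kronecker_mul, one_mul, one_mul]

variable [DecidableEq K]

lemma kronecker_one_eq_reindex_prodAssoc (M : Matrix K K ℂ) :
    M ⊗ₖ (1 : Matrix (A × B) (A × B) ℂ) =
      reindexAlgEquiv ℂ ℂ (Equiv.prodAssoc K A B) ((M ⊗ₖ 1) ⊗ₖ 1) := by
  rw [coe_reindexAlgEquiv, kronecker_assoc, one_kronecker_one]

lemma isometricExtension_eq_reindexAlgEquiv : isometricExtension V ρ =
    reindexAlgEquiv ℂ ℂ (Equiv.prodAssoc K A B)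
      ((V ⊗ₖ (1 : Matrix B B ℂ)) * ρ * (V ⊗ₖ (1 : Matrix B B ℂ))ᴴ) := by
  rw [conjTranspose_kronecker, conjTranspose_one]
  rfl

variable {V ρ} {M : Matrix K K ℂ}

lemma commute_kronecker_one_isometricExtension_iff :
    Commute (M ⊗ₖ (1 : Matrix (A × B) (A × B) ℂ)) (isometricExtension V ρ) ↔
      Commute ((M ⊗ₖ (1 : Matrix A A ℂ)) ⊗ₖ (1 : Matrix B B ℂ))
        ((V ⊗ₖ (1 : Matrix B B ℂ)) * ρ * (V ⊗ₖ (1 : Matrix B B ℂ))ᴴ) := by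
  rw [isometricExtension_eq_reindexAlgEquiv, kronecker_one_eq_reindex_prodAssoc]
  constructor
  · intro h
    simpa only [AlgEquiv.symm_apply_apply] using
      h.map (reindexAlgEquiv ℂ ℂ (Equiv.prodAssoc K A B)).symm
  · exact fun h => h.map (reindexAlgEquiv ℂ ℂ (Equiv.prodAssoc K A B))

lemma commute_compression_kronecker_one (hV : Vᴴ * V = 1)
    (h : Commute (M ⊗ₖ (1 : Matrix (A × B) (A × B) ℂ)) (isometricExtension V ρ)) :
    Commute (compression V M ⊗ₖ (1 : Matrix B B ℂ)) ρ := by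
  have hW : (V ⊗ₖ (1 : Matrix B B ℂ))ᴴ * (V ⊗ₖ (1 : Matrix B B ℂ)) = 1 := by
    rw [conjTranspose_kronecker, conjTranspose_one, ← mul_kronecker_mul, hV, one_mul,
      one_kronecker_one]
  rw [compression_kronecker_one]
  exact commute_mul_mul_of_commute hW (commute_kronecker_one_isometricExtension_iff.1 h)

lemma compression_kronecker_one_mul_mul_eq_zero {M' : Matrix K K ℂ}
    (h : Commute (M ⊗ₖ (1 : Matrix (A × B) (A × B) ℂ)) (isometricExtension V ρ))
    (hMM' : M * M' = 0) :
    (compression V M ⊗ₖ (1 : Matrix B B ℂ)) * ρ * (compression V M' ⊗ₖ (1 : Matrix B B ℂ)) =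
      0 := by
  rw [compression_kronecker_one, compression_kronecker_one]
  refine mul_mul_mul_mul_mul_eq_zero_of_commute
    (commute_kronecker_one_isometricExtension_iff.1 h) ?_
  rw [← mul_kronecker_mul, ← mul_kronecker_mul, hMM', zero_kronecker, zero_kronecker]

lemma kronecker_one_mul_isometricExtension_eq_zero (hM : IsStarProjection M)
    (h : compression V M = 0) :
    (M ⊗ₖ (1 : Matrix (A × B) (A × B) ℂ)) * isometricExtension V ρ = 0 := by
  have hM1 : IsStarProjection (M ⊗ₖ (1 : Matrix A A ℂ)) := hM.map (kroneckerIncludeLeft A)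
  have hMV : (M ⊗ₖ (1 : Matrix A A ℂ)) * V = 0 :=
    hM1.mul_eq_zero_of_conjTranspose_mul_mul_eq_zero h
  rw [isometricExtension_eq_reindexAlgEquiv, kronecker_one_eq_reindex_prodAssoc, ← map_mul,
    ← Matrix.mul_assoc, ← Matrix.mul_assoc, ← mul_kronecker_mul, hMV]
  simp

lemma IsSelfAdjoint.compression (hM : IsSelfAdjoint M) : IsSelfAdjoint (compression V M) :=
  have hM1 : IsSelfAdjoint (M ⊗ₖ (1 : Matrix A A ℂ)) := hM.map (kroneckerIncludeLeft A)
  isHermitian_conjTranspose_mul_mul V hM1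

end IsometricExtension

/-- If `ρ_AB` is a TQ-Q state on `A`, `V : ℂ^{d_A} → ℂ^{d_K} ⊗ ℂ^{d_A}` is an
isometry, and `τ_{KAB} = (V ⊗ₖ 1_B) ρ_AB (Vᴴ ⊗ₖ 1_B)` has invertible marginal
`τ_K = Tr_{AB} τ_{KAB}`, then `τ_{KAB}` is TQ-Q for the bipartition `K | AB`. -/
theorem totallyQuantum_contagious
    {K A B : Type*} [Fintype K] [DecidableEq K] [Fintype A] [DecidableEq A]
    [Fintype B] [DecidableEq B]
    (ρ : Matrix (A × B) (A × B) ℂ) (hρ : IsState ρ) (hTQ : IsTQQ ρ)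
    (V : Matrix (K × A) A ℂ) (hV : Vᴴ * V = 1)
    (τ : Matrix (K × (A × B)) (K × (A × B)) ℂ)
    (hτ : τ = Matrix.reindex (Equiv.prodAssoc K A B) (Equiv.prodAssoc K A B)
        ((V ⊗ₖ (1 : Matrix B B ℂ)) * ρ * (Vᴴ ⊗ₖ (1 : Matrix B B ℂ))))
    (hfull : IsUnit (trB τ)) :
    IsTQQ τ := by
  change τ = isometricExtension V ρ at hτ
  subst hτ
  rintro ⟨N, P, ⟨hherm, hidem, horth, -⟩, ⟨j, k, hjk, hPj, hPk⟩, hfix⟩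
  have hP a : IsStarProjection (P a) := ⟨hidem a, hherm a⟩
  have hcomm := commute_of_sum_mul_mul_eq
    (P := fun a => P a ⊗ₖ (1 : Matrix (A × B) (A × B) ℂ))
    (fun a => (hP a).isIdempotentElem.map (kroneckerIncludeLeft (A × B)))
    (fun a b hab => by rw [← mul_kronecker_mul, horth a b hab, one_mul, zero_kronecker]) hfix
  have hscalar a : ∃ c : ℝ, compression V (P a) = c • 1 :=
    hTQ.exists_eq_smul_one_of_commute (hP a).isSelfAdjoint.compression
      (commute_compression_kronecker_one hV (hcomm a))
  obtain ⟨c, hc⟩ := hscalar j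
  obtain ⟨d, hd⟩ := hscalar k
  have hcd : c = 0 ∨ d = 0 := by
    have h0 := compression_kronecker_one_mul_mul_eq_zero (hcomm j) (horth j k hjk)
    rw [hc, hd] at h0
    simpa [smul_kronecker, smul_smul, hρ.ne_zero, or_comm] using h0
  have hP0 a (h : compression V (P a) = 0) : P a = 0 :=
    eq_zero_of_kronecker_one_mul_eq_zero hfull
      (kronecker_one_mul_isometricExtension_eq_zero (hP a) h)
  rcases hcd with h | h
  · exact hPj (hP0 j (by rw [hc, h, zero_smul]))
  · exact hPk (hP0 k (by rw [hd, h, zero_smul]))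
end

section
/- For any finite family {K_i} of n×n complex matrices, there exists a unital completely positive map Φ on n×n complex matrices whose fixed-point set {X : Φ(X) = X} is exactly the set of matrices that commute with every K_i and with every K_iᴴ. -/
open Matrix Kronecker BigOperators
open scoped ComplexOrder

/-!
If `∑ Lⱼ Lⱼᴴ = ∑ Lⱼᴴ Lⱼ = 1`, a fixed point `X` of `Φ X = ∑ Lⱼ X Lⱼᴴ` satisfies
`∑ [Lⱼ, X] [Lⱼ, X]ᴴ = Φ (X Xᴴ) - X Xᴴ`, whose trace vanishes because `Φ` preserves traces;
so the fixed points of `Φ` are exactly the commutant of the `Lⱼ`. Take for the `Lⱼ` the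
matrices `√c Kᵢ`, `√c Kᵢᴴ` and `√(1 - c S)`, where `S = ∑ (Kᵢ Kᵢᴴ + Kᵢᴴ Kᵢ)` and `c > 0` is
small enough that `c S ≤ 1`. This family is unital and trace preserving, and its commutant
is that of the `Kᵢ` and `Kᵢᴴ`, since `√(1 - c S)` is a continuous function of `S`.
-/

open scoped MatrixOrder

section SpectralBound

variable {A : Type*} [Ring A] [StarRing A] [Algebra ℝ A] [TopologicalSpace A] [PartialOrder A]
  [StarOrderedRing A] [ContinuousFunctionalCalculus ℝ A IsSelfAdjoint]

theorem IsSelfAdjoint.exists_pos_smul_le_one {a : A} (ha : IsSelfAdjoint a) :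
    ∃ c : ℝ, 0 < c ∧ c • a ≤ 1 := by
  obtain ⟨r, hr⟩ := (ContinuousFunctionalCalculus.isCompact_spectrum (R := ℝ) a).bddAbove
  refine ⟨(1 + |r|)⁻¹, by positivity, ?_⟩
  rw [← cfc_const_mul_id _ a ha]
  refine cfc_le_one _ a fun x hx => ?_
  rw [inv_mul_le_iff₀ (by positivity)]
  linarith [hr hx, le_abs_self r]

end SpectralBound

namespace Matrix

variable {𝕜 m ι : Type*} [RCLike 𝕜] [Fintype m] [Fintype ι]

section KrausFixedPoints

theorem sum_commutator_mul_conjTranspose (L : ι → Matrix m m 𝕜) (X : Matrix m m 𝕜) :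
    ∑ j, (L j * X - X * L j) * (L j * X - X * L j)ᴴ =
      ∑ j, L j * (X * Xᴴ) * (L j)ᴴ - (∑ j, L j * X * (L j)ᴴ) * Xᴴ
        - X * ∑ j, L j * Xᴴ * (L j)ᴴ + X * (∑ j, L j * (L j)ᴴ) * Xᴴ := by
  simp only [Finset.sum_mul, Finset.mul_sum, ← Finset.sum_sub_distrib, ← Finset.sum_add_distrib]
  refine Finset.sum_congr rfl fun j _ => ?_
  simp only [conjTranspose_sub, conjTranspose_mul]
  noncomm_ring

theorem trace_sum_mul_mul_conjTranspose (L : ι → Matrix m m 𝕜) (Y : Matrix m m 𝕜) :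
    (∑ j, L j * Y * (L j)ᴴ).trace = ((∑ j, (L j)ᴴ * L j) * Y).trace := by
  simp only [trace_sum, Finset.sum_mul, trace_mul_cycle (L _) Y]

variable [DecidableEq m] {L : ι → Matrix m m 𝕜}

theorem commute_of_sum_mul_mul_conjTranspose_eq_self (hu : ∑ j, L j * (L j)ᴴ = 1)
    (ht : ∑ j, (L j)ᴴ * L j = 1) {X : Matrix m m 𝕜} (hX : ∑ j, L j * X * (L j)ᴴ = X)
    (j : ι) : Commute (L j) X := by
  have hX_star : ∑ j, L j * Xᴴ * (L j)ᴴ = Xᴴ := by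
    simpa [conjTranspose_sum, mul_assoc] using congrArg conjTranspose hX
  have hsum : (∑ j, (L j * X - X * L j) * (L j * X - X * L j)ᴴ).trace = 0 := by
    rw [sum_commutator_mul_conjTranspose, hX, hX_star, hu, mul_one, trace_add, trace_sub,
      trace_sub, trace_sum_mul_mul_conjTranspose, ht, one_mul]
    ring
  rw [trace_sum, Finset.sum_eq_zero_iff_of_nonneg fun j _ =>
    (posSemidef_self_mul_conjTranspose _).trace_nonneg] at hsum
  exact sub_eq_zero.mp (trace_mul_conjTranspose_self_eq_zero_iff.mp (hsum j (Finset.mem_univ j)))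

theorem sum_mul_mul_conjTranspose_eq_self_iff (hu : ∑ j, L j * (L j)ᴴ = 1)
    (ht : ∑ j, (L j)ᴴ * L j = 1) (X : Matrix m m 𝕜) :
    ∑ j, L j * X * (L j)ᴴ = X ↔ ∀ j, Commute (L j) X := by
  refine ⟨commute_of_sum_mul_mul_conjTranspose_eq_self hu ht, fun hX => ?_⟩
  simp_rw [(hX _).eq, mul_assoc, ← Finset.mul_sum, hu, mul_one]

end KrausFixedPoints

section CommutantKraus

def hermitianSquareSum (K : ι → Matrix m m 𝕜) : Matrix m m 𝕜 :=
  ∑ i, (K i * (K i)ᴴ + (K i)ᴴ * K i)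

theorem isHermitian_hermitianSquareSum (K : ι → Matrix m m 𝕜) :
    (hermitianSquareSum K).IsHermitian := by
  simp only [IsHermitian, hermitianSquareSum, conjTranspose_sum, conjTranspose_add,
    conjTranspose_mul, conjTranspose_conjTranspose]

theorem hermitianSquareSum_smul (c : ℝ) (K : ι → Matrix m m 𝕜) :
    hermitianSquareSum (fun i => c • K i) = (c * c) • hermitianSquareSum K := by
  simp only [hermitianSquareSum, Finset.smul_sum, conjTranspose_smul, star_trivial, smul_add,
    smul_mul_smul, mul_smul]

theorem commute_hermitianSquareSum {K : ι → Matrix m m 𝕜} {X : Matrix m m 𝕜}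
    (hK : ∀ i, Commute (K i) X ∧ Commute (K i)ᴴ X) : Commute (hermitianSquareSum K) X :=
  .sum_left _ _ _ fun i _ =>
    ((hK i).1.mul_left (hK i).2).add_left ((hK i).2.mul_left (hK i).1)

variable [DecidableEq m]

noncomputable def commutantKraus (K : ι → Matrix m m 𝕜) : Option (ι ⊕ ι) → Matrix m m 𝕜 :=
  fun o => o.elim (CFC.sqrt (1 - hermitianSquareSum K)) (Sum.elim K fun i => (K i)ᴴ)

variable {K : ι → Matrix m m 𝕜}

theorem conjTranspose_commutantKraus (o : Option (ι ⊕ ι)) :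
    (commutantKraus K o)ᴴ = commutantKraus K (o.map Sum.swap) := by
  rcases o with _ | i | i
  · exact (CFC.sqrt_nonneg _).posSemidef.isHermitian
  · rfl
  · exact conjTranspose_conjTranspose _

theorem sum_commutantKraus_mul_conjTranspose (hK : hermitianSquareSum K ≤ 1) :
    ∑ o, commutantKraus K o * (commutantKraus K o)ᴴ = 1 := by
  simp only [conjTranspose_commutantKraus]
  simp only [Fintype.sum_option, Fintype.sum_sum_type, Option.map_none, Option.map_some,
    Sum.swap_inl, Sum.swap_inr, commutantKraus, Option.elim_none, Option.elim_some,
    Sum.elim_inl, Sum.elim_inr, CFC.sqrt_mul_sqrt_self _ (sub_nonneg.mpr hK)]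
  simp only [hermitianSquareSum, Finset.sum_add_distrib]
  abel

theorem sum_conjTranspose_mul_commutantKraus (hK : hermitianSquareSum K ≤ 1) :
    ∑ o, (commutantKraus K o)ᴴ * commutantKraus K o = 1 := by
  rw [← sum_commutantKraus_mul_conjTranspose hK]
  refine Fintype.sum_equiv (Equiv.optionCongr (Equiv.sumComm ι ι)) _ _ fun o => ?_
  simp only [conjTranspose_commutantKraus, Equiv.optionCongr_apply, Equiv.sumComm_apply,
    Option.map_map, Sum.swap_swap_eq, Option.map_id_fun, id]

theorem forall_commute_commutantKraus_iff (X : Matrix m m 𝕜) :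
    (∀ o, Commute (commutantKraus K o) X) ↔ ∀ i, Commute (K i) X ∧ Commute (K i)ᴴ X := by
  refine ⟨fun h i => ⟨h (some (.inl i)), h (some (.inr i))⟩, fun h => ?_⟩
  rintro (_ | i | i)
  · rw [commutantKraus, Option.elim_none, CFC.sqrt_eq_cfc]
    exact ((Commute.one_left X).sub_left (commute_hermitianSquareSum h)).cfc_nnreal _
  · exact (h i).1
  · exact (h i).2

end CommutantKraus

end Matrix

/-- For any finite family `{K i}` of `n × n` matrices there is a unital CP map
(with Kraus operators `L j`) whose fixed points are exactly the matrices commuting with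
every `K i` and every `(K i)ᴴ`. -/
theorem exists_unitalCP_with_commutant_fixed_points
    {n : ℕ} (N : ℕ) (K : Fin N → Matrix (Fin n) (Fin n) ℂ) :
    ∃ (M : ℕ) (L : Fin M → Matrix (Fin n) (Fin n) ℂ),
      (∑ j, L j * (L j)ᴴ = 1) ∧
      ∀ X : Matrix (Fin n) (Fin n) ℂ,
        (∑ j, L j * X * (L j)ᴴ = X) ↔
        (∀ i, K i * X = X * K i ∧ (K i)ᴴ * X = X * (K i)ᴴ) := by
  obtain ⟨c, hc, hcK⟩ := (isHermitian_hermitianSquareSum K).isSelfAdjoint.exists_pos_smul_le_one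
  have hK : hermitianSquareSum (fun i => √c • K i) ≤ 1 := by
    rwa [hermitianSquareSum_smul, Real.mul_self_sqrt hc.le]
  let e := (Fintype.equivFin (Option (Fin N ⊕ Fin N))).symm
  have hu := (e.sum_comp _).trans (sum_commutantKraus_mul_conjTranspose hK)
  have ht := (e.sum_comp _).trans (sum_conjTranspose_mul_commutantKraus hK)
  refine ⟨_, fun j => commutantKraus (fun i => √c • K i) (e j), hu, fun X => ?_⟩
  rw [sum_mul_mul_conjTranspose_eq_self_iff hu ht]
  refine (e.forall_congr_right (q := fun o => Commute (commutantKraus _ o) X)).trans ?_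
  have hsqrt : √c ≠ 0 := (Real.sqrt_pos.mpr hc).ne'
  simp only [forall_commute_commutantKraus_iff, conjTranspose_smul, star_trivial,
    Commute.smul_left_iff₀ hsqrt]
  rfl
end

section
/- Let Φ be a unital completely positive map on matrices indexed by (Fin m) × (Fin d) whose fixed-point set is exactly { X ⊗ₖ 1_d : X an m×m complex matrix }. Then there exists a unital completely positive map Ψ on d×d complex matrices such that Φ = id ⊗ Ψ, i.e. Φ(X ⊗ₖ Y) = X ⊗ₖ Ψ(Y) for all m×m matrices X and d×d matrices Y, and the fixed points of Ψ are exactly the scalar multiples of the identity 1_d. -/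
open Matrix Kronecker BigOperators
open scoped ComplexOrder

lemma auxKronConjT {m d : Type*} [Fintype m] [Fintype d]
    (A : Matrix m m ℂ) (B : Matrix d d ℂ) : (A ⊗ₖ B)ᴴ = Aᴴ ⊗ₖ Bᴴ := by
  ext ⟨a, b⟩ ⟨a', b'⟩
  simp [Matrix.conjTranspose_apply, Matrix.kroneckerMap_apply, star_mul']

lemma auxKronSum {m d : Type*} [Fintype m] [Fintype d] {N : ℕ}
    (X : Matrix m m ℂ) (B : Fin N → Matrix d d ℂ) :
    X ⊗ₖ (∑ i, B i) = ∑ i, X ⊗ₖ B i := by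
  ext ⟨a, b⟩ ⟨a', b'⟩
  simp [Matrix.kroneckerMap_apply, Matrix.sum_apply, Finset.mul_sum]

lemma auxSumZero {n : Type*} [Fintype n] {N : ℕ} (M : Fin N → Matrix n n ℂ)
    (h : ∑ i, M i * (M i)ᴴ = 0) : ∀ i, M i = 0 := by
  have key : ∀ a, ∑ i, ∑ k, Complex.normSq (M i a k) = 0 := by
    intro a
    have h2 : (∑ i, M i * (M i)ᴴ) a a = 0 := by rw [h]; rfl
    rw [Matrix.sum_apply] at h2
    have h3 : ∀ i ∈ Finset.univ, (M i * (M i)ᴴ) a a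
        = ((∑ k, Complex.normSq (M i a k) : ℝ) : ℂ) := by
      intro i _
      rw [Matrix.mul_apply]
      push_cast
      refine Finset.sum_congr rfl fun k _ => ?_
      exact Complex.mul_conj _
    rw [Finset.sum_congr rfl h3] at h2
    exact_mod_cast h2
  intro i; ext a b
  have h4 : Complex.normSq (M i a b) = 0 := by
    have hi := (Finset.sum_eq_zero_iff_of_nonneg
      (fun j _ => Finset.sum_nonneg fun k _ => Complex.normSq_nonneg _)).mp (key a) i
      (Finset.mem_univ i)
    exact (Finset.sum_eq_zero_iff_of_nonneg
      (fun k _ => Complex.normSq_nonneg _)).mp hi b (Finset.mem_univ b)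
  simpa using Complex.normSq_eq_zero.mp h4

lemma auxDepol {d : ℕ} (Y : Matrix (Fin d) (Fin d) ℂ) :
    ∑ p : Fin d, ∑ q : Fin d,
      Matrix.single p q (1:ℂ) * Y * (Matrix.single p q (1:ℂ))ᴴ
    = Y.trace • (1 : Matrix (Fin d) (Fin d) ℂ) := by
  ext a b
  simp [Matrix.sum_apply, Matrix.mul_apply, Matrix.single, Matrix.one_apply,
    Matrix.conjTranspose_apply, ite_and, Finset.sum_ite_eq, Finset.sum_ite_eq',
    Matrix.trace, Matrix.diag, mul_comm, apply_ite]
  split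
  · next h => subst h; simp
  · next h => intro h'; exact absurd h'.symm h

lemma auxCommSumZero {n : Type*} [Fintype n] [DecidableEq n] {N : ℕ}
    (K : Fin N → Matrix n n ℂ) (Z : Matrix n n ℂ)
    (hunit : ∑ i, K i * (K i)ᴴ = 1)
    (hZ : ∑ i, K i * Z * (K i)ᴴ = Z)
    (hZH : ∑ i, K i * Zᴴ * (K i)ᴴ = Zᴴ)
    (hZZH : ∑ i, K i * (Z * Zᴴ) * (K i)ᴴ = Z * Zᴴ) :
    ∑ i, (Z * K i - K i * Z) * (Z * K i - K i * Z)ᴴ = 0 := by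
  have expand : ∀ i : Fin N, (Z * K i - K i * Z) * (Z * K i - K i * Z)ᴴ
      = Z * (K i * (K i)ᴴ) * Zᴴ - Z * (K i * Zᴴ * (K i)ᴴ)
        - (K i * Z * (K i)ᴴ) * Zᴴ + K i * (Z * Zᴴ) * (K i)ᴴ := by
    intro i
    simp only [conjTranspose_sub, conjTranspose_mul, mul_sub, sub_mul]
    noncomm_ring
  rw [Finset.sum_congr rfl (fun i _ => expand i)]
  simp only [Finset.sum_add_distrib, Finset.sum_sub_distrib, ← Finset.mul_sum,
    ← Finset.sum_mul, hZ, hZH, hZZH]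
  rw [hunit]
  simp

/-- If the fixed points of a unital CP map `Φ` on matrices indexed by
`(Fin m) × (Fin d)` are exactly `{ X ⊗ₖ 1_d }`, then `Φ = id ⊗ Ψ` for some unital CP map
`Ψ` on `d × d` matrices whose fixed points are exactly the scalar multiples of `1_d`. -/
theorem unitalCP_factorizes
    {m d : ℕ}
    (Φ : Matrix (Fin m × Fin d) (Fin m × Fin d) ℂ →
      Matrix (Fin m × Fin d) (Fin m × Fin d) ℂ)
    (hΦ : IsUnitalCP Φ)
    (hfix : ∀ Z, Φ Z = Z ↔
      ∃ X : Matrix (Fin m) (Fin m) ℂ, Z = X ⊗ₖ (1 : Matrix (Fin d) (Fin d) ℂ)) :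
    ∃ Ψ : Matrix (Fin d) (Fin d) ℂ → Matrix (Fin d) (Fin d) ℂ,
      IsUnitalCP Ψ ∧
      (∀ (X : Matrix (Fin m) (Fin m) ℂ) (Y : Matrix (Fin d) (Fin d) ℂ),
        Φ (X ⊗ₖ Y) = X ⊗ₖ Ψ Y) ∧
      (∀ Y : Matrix (Fin d) (Fin d) ℂ,
        Ψ Y = Y ↔ ∃ c : ℂ, Y = c • (1 : Matrix (Fin d) (Fin d) ℂ)) := by
  by_cases hd : d = 0
  · subst hd
    have hsubP : ∀ (P Q : Matrix (Fin m × Fin 0) (Fin m × Fin 0) ℂ), P = Q := by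
      intro P Q; ext ⟨a, b⟩; exact b.elim0
    have hsubD : ∀ (P Q : Matrix (Fin 0) (Fin 0) ℂ), P = Q := by
      intro P Q; ext b; exact b.elim0
    exact ⟨id, ⟨1, fun _ => 1, fun X => hsubD _ _, hsubD _ _⟩,
      fun X Y => hsubP _ _, fun Y => ⟨fun _ => ⟨0, hsubD _ _⟩, fun _ => rfl⟩⟩
  by_cases hm : m = 0
  · subst hm
    have hdC : (d : ℂ) ≠ 0 := Nat.cast_ne_zero.mpr hd
    set c : ℂ := (((Real.sqrt d)⁻¹ : ℝ) : ℂ) with hc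
    have hstar : star c = c := by rw [hc]; exact Complex.conj_ofReal _
    have hcc : c * c = (d : ℂ)⁻¹ := by
      rw [hc, ← Complex.ofReal_mul, ← mul_inv, Real.mul_self_sqrt (Nat.cast_nonneg d)]
      push_cast
      ring
    have keysum : ∀ Y : Matrix (Fin d) (Fin d) ℂ,
        ∑ i : Fin (d*d),
          (c • Matrix.single (finProdFinEquiv.symm i).1 (finProdFinEquiv.symm i).2 (1:ℂ))
            * Y *
          (c • Matrix.single (finProdFinEquiv.symm i).1 (finProdFinEquiv.symm i).2 (1:ℂ))ᴴ
        = (d : ℂ)⁻¹ • Y.trace • (1 : Matrix (Fin d) (Fin d) ℂ) := by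
      intro Y
      rw [← Equiv.sum_comp (finProdFinEquiv : Fin d × Fin d ≃ Fin (d*d))]
      simp only [Equiv.symm_apply_apply]
      have step : ∀ pq : Fin d × Fin d,
          (c • Matrix.single pq.1 pq.2 (1:ℂ)) * Y *
            (c • Matrix.single pq.1 pq.2 (1:ℂ))ᴴ
          = (c * c) • (Matrix.single pq.1 pq.2 (1:ℂ) * Y *
              (Matrix.single pq.1 pq.2 (1:ℂ))ᴴ) := by
        intro pq
        rw [Matrix.conjTranspose_smul, hstar]
        simp only [smul_mul_assoc, mul_smul_comm, smul_smul]
      rw [Finset.sum_congr rfl (fun pq _ => step pq), ← Finset.smul_sum]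
      rw [Fintype.sum_prod_type, auxDepol, hcc]
    refine ⟨fun Y => (d : ℂ)⁻¹ • Y.trace • 1, ⟨d*d,
      fun i => c • Matrix.single (finProdFinEquiv.symm i).1
        (finProdFinEquiv.symm i).2 (1:ℂ), fun Y => (keysum Y).symm, ?_⟩, ?_, ?_⟩
    · have h1 := keysum 1
      simp only [mul_one] at h1
      rw [h1, Matrix.trace_one]
      simp [Fintype.card_fin d, smul_smul, inv_mul_cancel₀ hdC]
    · intro X Y
      ext ⟨a, b⟩
      exact a.elim0
    · intro Y
      constructor
      · intro h
        refine ⟨(d : ℂ)⁻¹ * Y.trace, ?_⟩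
        rw [← smul_smul]
        exact h.symm
      · rintro ⟨c0, rfl⟩
        show (d : ℂ)⁻¹ • (Matrix.trace (c0 • (1 : Matrix (Fin d) (Fin d) ℂ))) • 1 = c0 • 1
        rw [Matrix.trace_smul, Matrix.trace_one, smul_eq_mul, smul_smul]
        congr 1
        simp only [Fintype.card_fin]
        field_simp
  · -- main case : m > 0
    obtain ⟨N, K, hrep, hunit⟩ := hΦ
    have hm' : 0 < m := Nat.pos_of_ne_zero hm
    set a0 : Fin m := ⟨0, hm'⟩ with ha0
    have hcomm : ∀ (X : Matrix (Fin m) (Fin m) ℂ) (i : Fin N),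
        (X ⊗ₖ (1 : Matrix (Fin d) (Fin d) ℂ)) * K i
          = K i * (X ⊗ₖ (1 : Matrix (Fin d) (Fin d) ℂ)) := by
      intro X i
      set Z := X ⊗ₖ (1 : Matrix (Fin d) (Fin d) ℂ) with hZdef
      have hZH : Zᴴ = Xᴴ ⊗ₖ (1 : Matrix (Fin d) (Fin d) ℂ) := by
        rw [hZdef, auxKronConjT, Matrix.conjTranspose_one]
      have fix1 : ∑ j, K j * Z * (K j)ᴴ = Z := by
        rw [← hrep]; exact (hfix Z).mpr ⟨X, rfl⟩
      have fix2 : ∑ j, K j * Zᴴ * (K j)ᴴ = Zᴴ := by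
        rw [← hrep]; exact (hfix Zᴴ).mpr ⟨Xᴴ, hZH⟩
      have fix3 : ∑ j, K j * (Z * Zᴴ) * (K j)ᴴ = Z * Zᴴ := by
        rw [← hrep]
        refine (hfix _).mpr ⟨X * Xᴴ, ?_⟩
        rw [hZH, hZdef, ← Matrix.mul_kronecker_mul, one_mul]
      have hsum0 := auxCommSumZero K Z hunit fix1 fix2 fix3
      have := auxSumZero _ hsum0 i
      exact sub_eq_zero.mp this
    set L : Fin N → Matrix (Fin d) (Fin d) ℂ :=
      fun i => Matrix.of fun b b' => K i (a0, b) (a0, b') with hLdef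
    have hKL : ∀ i, K i = (1 : Matrix (Fin m) (Fin m) ℂ) ⊗ₖ L i := by
      intro i
      ext ⟨a, b⟩ ⟨a', b'⟩
      have h2 := congrFun (congrFun (hcomm (Matrix.single a0 a (1:ℂ)) i)
        (a0, b)) (a', b')
      simp [Matrix.mul_apply, Matrix.kroneckerMap_apply, Matrix.single,
        Matrix.one_apply, Fintype.sum_prod_type, ite_and, Finset.sum_ite_eq,
        Finset.sum_ite_eq', hLdef] at h2 ⊢
      exact h2
    have hLunit : ∑ i, L i * (L i)ᴴ = 1 := by
      have h1 : (1 : Matrix (Fin m) (Fin m) ℂ) ⊗ₖ (∑ i, L i * (L i)ᴴ)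
          = (1 : Matrix (Fin m) (Fin m) ℂ) ⊗ₖ (1 : Matrix (Fin d) (Fin d) ℂ) := by
        rw [auxKronSum, Matrix.one_kronecker_one, ← hunit]
        refine Finset.sum_congr rfl fun i _ => ?_
        rw [hKL i, auxKronConjT, Matrix.conjTranspose_one, ← Matrix.mul_kronecker_mul,
          one_mul]
      ext b b'
      have := congrFun (congrFun h1 (a0, b)) (a0, b')
      simpa [Matrix.kroneckerMap_apply, Matrix.one_apply] using this
    have hfac : ∀ (X : Matrix (Fin m) (Fin m) ℂ) (Y : Matrix (Fin d) (Fin d) ℂ),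
        Φ (X ⊗ₖ Y) = X ⊗ₖ (∑ i, L i * Y * (L i)ᴴ) := by
      intro X Y
      rw [hrep, auxKronSum]
      refine Finset.sum_congr rfl fun i _ => ?_
      rw [hKL i, auxKronConjT, Matrix.conjTranspose_one, ← Matrix.mul_kronecker_mul,
        ← Matrix.mul_kronecker_mul, one_mul, mul_one]
    refine ⟨fun Y => ∑ i, L i * Y * (L i)ᴴ, ⟨N, L, fun Y => rfl, hLunit⟩, hfac, ?_⟩
    intro Y
    constructor
    · intro h
      have h' : ∑ i, L i * Y * (L i)ᴴ = Y := h
      have hfixY : Φ ((1 : Matrix (Fin m) (Fin m) ℂ) ⊗ₖ Y)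
          = (1 : Matrix (Fin m) (Fin m) ℂ) ⊗ₖ Y := by rw [hfac 1 Y, h']
      obtain ⟨X, hX⟩ := (hfix _).mp hfixY
      refine ⟨X a0 a0, ?_⟩
      ext b b'
      have := congrFun (congrFun hX (a0, b)) (a0, b')
      simp [Matrix.kroneckerMap_apply, Matrix.one_apply, Matrix.smul_apply] at this ⊢
      simpa using this
    · rintro ⟨c0, rfl⟩
      show ∑ i, L i * (c0 • (1 : Matrix (Fin d) (Fin d) ℂ)) * (L i)ᴴ = c0 • 1
      have : ∀ i : Fin N, L i * (c0 • (1 : Matrix (Fin d) (Fin d) ℂ)) * (L i)ᴴ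
          = c0 • (L i * (L i)ᴴ) := by
        intro i
        simp [Matrix.mul_smul, Matrix.smul_mul]
      rw [Finset.sum_congr rfl (fun i _ => this i), ← Finset.smul_sum, hLunit]
end

section
/- Let Φ be a quantum channel on n×n complex matrices and let X be a matrix with Φ(X) = X. Write X = H + iA with H = (X + Xᴴ)/2 and A = (X − Xᴴ)/(2i) Hermitian; then Φ(H) = H and Φ(A) = A. Moreover, if a Hermitian matrix H with Φ(H) = H is written as H = P − N with P and N positive semidefinite and PN = 0, then Φ(P) = P and Φ(N) = N. -/
open Matrix Kronecker BigOperators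
open scoped ComplexOrder

/-! A channel is linear, commutes with `ᴴ`, is positive and trace-preserving; the first two
properties give the claims about `X`. If `H = P - N` with `P * N = 0`, then `Φ P - Φ N = P - N` is
a second decomposition of `H` into positive parts, with `tr (Φ P) = tr P`. The Jordan decomposition
has the least trace among all such: with `Q` the support projection of `P`,
`tr (Φ N * Q) + tr (Φ P * (1 - Q)) = tr (Φ P) - tr P = 0`, and both positive terms vanish only if
`Φ N * Q = 0` and `Φ P * (1 - Q) = 0`, which forces `Φ P = P`. -/

open scoped MatrixOrder

namespace Matrix

variable {n 𝕜 : Type*} [Fintype n] [RCLike 𝕜]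

lemma trace_mul_mul_of_isIdempotentElem {E : Matrix n n 𝕜} (hE : IsIdempotentElem E)
    (M : Matrix n n 𝕜) : (E * M * E).trace = (M * E).trace := by
  rw [trace_mul_cycle, hE.eq, trace_mul_comm]

lemma PosSemidef.trace_mul_nonneg_of_isStarProjection {A E : Matrix n n 𝕜} (hA : A.PosSemidef)
    (hE : IsStarProjection E) : 0 ≤ (A * E).trace := by
  have := (hA.conjTranspose_mul_mul_same E).trace_nonneg
  rwa [← star_eq_conjTranspose, hE.isSelfAdjoint.star_eq,
    trace_mul_mul_of_isIdempotentElem hE.isIdempotentElem] at this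

lemma PosSemidef.mul_eq_zero_of_trace_conjTranspose_mul_mul_eq_zero {m : Type*} [Fintype m]
    {A : Matrix n n 𝕜} (hA : A.PosSemidef) {E : Matrix n m 𝕜} (h : (Eᴴ * A * E).trace = 0) :
    A * E = 0 := by
  classical
  obtain ⟨B, rfl⟩ := CStarAlgebra.nonneg_iff_eq_star_mul_self.mp hA.nonneg
  rw [star_eq_conjTranspose] at h ⊢
  have hBE : Eᴴ * (Bᴴ * B) * E = (B * E)ᴴ * (B * E) := by
    simp only [conjTranspose_mul, Matrix.mul_assoc]
  rw [hBE, trace_conjTranspose_mul_self_eq_zero_iff] at h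
  rw [Matrix.mul_assoc, h, Matrix.mul_zero]

lemma PosSemidef.mul_eq_zero_of_isStarProjection {A E : Matrix n n 𝕜} (hA : A.PosSemidef)
    (hE : IsStarProjection E) (h : (A * E).trace = 0) : A * E = 0 := by
  refine hA.mul_eq_zero_of_trace_conjTranspose_mul_mul_eq_zero ?_
  rwa [← star_eq_conjTranspose, hE.isSelfAdjoint.star_eq,
    trace_mul_mul_of_isIdempotentElem hE.isIdempotentElem]

lemma IsHermitian.exists_isStarProjection_mul_eq_self [DecidableEq n] {P : Matrix n n 𝕜}
    (hP : P.IsHermitian) :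
    ∃ Q : Matrix n n 𝕜, IsStarProjection Q ∧ P * Q = P ∧ ∀ N, N * P = 0 → N * Q = 0 := by
  have hcont (f : ℝ → ℝ) : ContinuousOn f (spectrum ℝ P) := P.finite_real_spectrum.continuousOn f
  have hid : cfc id P = P := cfc_id ℝ P hP.isSelfAdjoint
  -- `x * x⁻¹` is the indicator of `x ≠ 0` (as `0⁻¹ = 0`): this is the support projection of `P`.
  have hQ : cfc (fun x : ℝ => id x * x⁻¹) P = P * cfc (fun x : ℝ => x⁻¹) P := by
    rw [cfc_mul id (fun x : ℝ => x⁻¹) P (hcont _) (hcont _), hid]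
  refine ⟨_, ⟨?_, cfc_predicate _ P⟩, ?_, fun N hN => by rw [hQ, ← mul_assoc, hN, zero_mul]⟩
  · rw [IsIdempotentElem, ← cfc_mul _ _ P (hcont _) (hcont _)]
    refine cfc_congr fun x _ => ?_
    by_cases hx : x = 0 <;> simp [hx]
  · calc P * _ = cfc (fun x : ℝ => id x * (id x * x⁻¹)) P := by
          rw [cfc_mul id (fun x : ℝ => id x * x⁻¹) P (hcont _) (hcont _), hid]
      _ = cfc id P := cfc_congr fun x _ => by by_cases hx : x = 0 <;> simp [hx]
      _ = P := hid

theorem eq_of_sub_eq_sub_of_trace_eq [DecidableEq n] {P N A B : Matrix n n 𝕜}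
    (hP : P.IsHermitian) (hN : N.IsHermitian) (hPN : P * N = 0)
    (hA : A.PosSemidef) (hB : B.PosSemidef) (h : A - B = P - N) (htr : A.trace = P.trace) :
    A = P := by
  obtain ⟨Q, hQ, hPQ, hQ_of_mul_eq_zero⟩ := hP.exists_isStarProjection_mul_eq_self
  have hNQ : N * Q = 0 := hQ_of_mul_eq_zero N <| by
    rw [← hP.eq, ← hN.eq, ← conjTranspose_mul, hPN, conjTranspose_zero]
  have htr_sum : (B * Q).trace + (A * (1 - Q)).trace = 0 := by
    calc (B * Q).trace + (A * (1 - Q)).trace = A.trace - ((A - B) * Q).trace := by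
          simp only [Matrix.mul_sub, Matrix.sub_mul, Matrix.mul_one, trace_sub]; ring
      _ = 0 := by rw [h, Matrix.sub_mul, hPQ, hNQ, sub_zero, htr, sub_self]
  obtain ⟨hBQ, hAQ⟩ := (add_eq_zero_iff_of_nonneg (hB.trace_mul_nonneg_of_isStarProjection hQ)
    (hA.trace_mul_nonneg_of_isStarProjection hQ.one_sub)).mp htr_sum
  replace hBQ := hB.mul_eq_zero_of_isStarProjection hQ hBQ
  replace hAQ := hA.mul_eq_zero_of_isStarProjection hQ.one_sub hAQ
  calc A = (A - B) * Q + B * Q + A * (1 - Q) := by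
        rw [Matrix.sub_mul, sub_add_cancel, ← Matrix.mul_add, add_sub_cancel, Matrix.mul_one]
    _ = P := by rw [h, hBQ, hAQ, Matrix.sub_mul, hPQ, hNQ, sub_zero, add_zero, add_zero]

end Matrix

namespace IsQChannel

variable {m n : Type*} [Fintype m] [DecidableEq m] [Fintype n] {Φ : Matrix m m ℂ → Matrix n n ℂ}

lemma isLinearMap (hΦ : IsQChannel Φ) : IsLinearMap ℂ Φ := by
  obtain ⟨N, K, hK, -⟩ := hΦ
  constructor <;> intros <;>
    simp only [hK, Matrix.mul_add, Matrix.add_mul, Finset.sum_add_distrib, Matrix.mul_smul,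
      Matrix.smul_mul, Finset.smul_sum]

lemma map_conjTranspose (hΦ : IsQChannel Φ) (X : Matrix m m ℂ) : Φ Xᴴ = (Φ X)ᴴ := by
  obtain ⟨N, K, hK, -⟩ := hΦ
  simp only [hK, conjTranspose_sum, conjTranspose_mul, conjTranspose_conjTranspose,
    Matrix.mul_assoc]

lemma posSemidef_map (hΦ : IsQChannel Φ) {X : Matrix m m ℂ} (hX : X.PosSemidef) :
    (Φ X).PosSemidef := by
  obtain ⟨N, K, hK, -⟩ := hΦ
  rw [hK]
  exact Matrix.posSemidef_sum _ fun i _ => hX.mul_mul_conjTranspose_same (K i)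

lemma trace_map (hΦ : IsQChannel Φ) (X : Matrix m m ℂ) : (Φ X).trace = X.trace := by
  obtain ⟨N, K, hK, hTP⟩ := hΦ
  calc (Φ X).trace = ∑ i, ((K i)ᴴ * K i * X).trace := by
        rw [hK, trace_sum]
        exact Finset.sum_congr rfl fun i _ => trace_mul_cycle _ _ _
    _ = X.trace := by rw [← trace_sum, ← Finset.sum_mul, hTP, Matrix.one_mul]

end IsQChannel

/-- If a quantum channel `Φ` fixes `X`, it fixes the Hermitian part
`H = (X + Xᴴ)/2` and the anti-Hermitian part `A = (X − Xᴴ)/(2i)`. Moreover, if a Hermitian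
matrix `H` with `Φ H = H` is written as `H = P − N` with `P, N` positive semidefinite and
`P * N = 0`, then `Φ P = P` and `Φ N = N`. -/
theorem channel_fixes_parts
    {n : ℕ} (Φ : Matrix (Fin n) (Fin n) ℂ → Matrix (Fin n) (Fin n) ℂ)
    (hΦ : IsQChannel Φ)
    (X : Matrix (Fin n) (Fin n) ℂ) (hX : Φ X = X) :
    Φ (((1 : ℂ)/2) • (X + Xᴴ)) = ((1 : ℂ)/2) • (X + Xᴴ) ∧
    Φ ((1/(2 * Complex.I)) • (X - Xᴴ)) = (1/(2 * Complex.I)) • (X - Xᴴ) ∧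
    (∀ H P N : Matrix (Fin n) (Fin n) ℂ, H.IsHermitian → Φ H = H →
      P.PosSemidef → N.PosSemidef → P * N = 0 → H = P - N →
      Φ P = P ∧ Φ N = N) := by
  have hlin := hΦ.isLinearMap
  have hXH : Φ Xᴴ = Xᴴ := by rw [hΦ.map_conjTranspose, hX]
  refine ⟨by rw [hlin.map_smul, hlin.map_add, hX, hXH],
    by rw [hlin.map_smul, hlin.map_sub, hX, hXH], fun H P N _ hH hP hN hPN hHPN => ?_⟩
  have hsub : Φ P - Φ N = P - N := by rw [← hlin.map_sub, ← hHPN, hH]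
  have hPfix : Φ P = P := Matrix.eq_of_sub_eq_sub_of_trace_eq hP.isHermitian hN.isHermitian hPN
    (hΦ.posSemidef_map hP) (hΦ.posSemidef_map hN) hsub (hΦ.trace_map P)
  exact ⟨hPfix, by rwa [hPfix, sub_right_inj] at hsub⟩
end

section
/- Let Φ be a quantum channel on n×n complex matrices, let ρ be a positive semidefinite matrix with Φ(ρ) = ρ, and let Q be the orthogonal projection onto the range (support) of ρ. Then Tr[(1 − Q)Φ(Q)] = 0, and every positive semidefinite matrix σ with QσQ = σ satisfies QΦ(σ)Q = Φ(σ) (i.e., the support of Φ(σ) remains inside the range of Q). -/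
open Matrix Kronecker BigOperators
open scoped ComplexOrder

/-! If `Φ(ρ) = ρ` then `(1 - Q) Φ(ρ) (1 - Q) = 0` is a sum of the positive semidefinite
terms `(1 - Q) Kᵢ ρ Kᵢᴴ (1 - Q)`, so each of them vanishes, which forces `(1 - Q) Kᵢ ρ = 0`.
As `ρ` and `Q` have the same range, `(1 - Q) Kᵢ Q = 0`: every Kraus operator maps the support
of `ρ` into itself, and both claims follow by conjugating with `Q`. -/

open scoped MatrixOrder

namespace Matrix

theorem mul_eq_zero_iff_range_mulVecLin_le_ker {l m n R : Type*} [CommRing R]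
    [Fintype m] [Fintype n] [DecidableEq n] {M : Matrix l m R} {C : Matrix m n R} :
    M * C = 0 ↔ LinearMap.range C.mulVecLin ≤ LinearMap.ker M.mulVecLin := by
  rw [LinearMap.range_le_ker_iff, ← mulVecLin_mul, ← toLin'_apply', LinearEquiv.map_eq_zero_iff]

theorem mul_eq_zero_of_range_mulVecLin_le {l m n p R : Type*} [CommRing R]
    [Fintype m] [Fintype n] [Fintype p] [DecidableEq n] [DecidableEq p]
    {A : Matrix m n R} {B : Matrix m p R} {M : Matrix l m R}
    (hAB : LinearMap.range A.mulVecLin ≤ LinearMap.range B.mulVecLin) (hB : M * B = 0) :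
    M * A = 0 :=
  mul_eq_zero_iff_range_mulVecLin_le_ker.mpr
    (hAB.trans (mul_eq_zero_iff_range_mulVecLin_le_ker.mp hB))

theorem PosSemidef.mul_eq_zero_of_mul_mul_conjTranspose_eq_zero
    {m n 𝕜 : Type*} [Fintype m] [Fintype n] [RCLike 𝕜]
    {A : Matrix n n 𝕜} (hA : A.PosSemidef) {M : Matrix m n 𝕜} (h : M * A * Mᴴ = 0) :
    M * A = 0 := by
  classical
  obtain ⟨B, rfl⟩ := CStarAlgebra.nonneg_iff_eq_star_mul_self.mp hA.nonneg
  have hMB : M * Bᴴ = 0 := by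
    rw [← trace_mul_conjTranspose_self_eq_zero_iff, conjTranspose_mul,
      conjTranspose_conjTranspose]
    simpa only [star_eq_conjTranspose, Matrix.mul_assoc, trace_zero] using congrArg trace h
  rw [star_eq_conjTranspose, ← Matrix.mul_assoc, hMB, Matrix.zero_mul]

end Matrix

section Kraus

variable {ι n 𝕜 : Type*} [Fintype ι] [Fintype n] [RCLike 𝕜]

def krausMap {m : Type*} [Fintype m] (K : ι → Matrix n m 𝕜) (X : Matrix m m 𝕜) :
    Matrix n n 𝕜 :=
  ∑ i, K i * X * (K i)ᴴ

theorem mul_kraus_mul_eq_zero_of_isFixedPt (K : ι → Matrix n n 𝕜) {ρ P : Matrix n n 𝕜}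
    (hρ : ρ.PosSemidef) (hfix : Function.IsFixedPt (krausMap K) ρ) (hP : P * ρ = 0) (i : ι) :
    P * K i * ρ = 0 := by
  have hsum : ∑ j, P * K j * ρ * (P * K j)ᴴ = 0 := by
    calc ∑ j, P * K j * ρ * (P * K j)ᴴ = P * krausMap K ρ * Pᴴ := by
          simp only [krausMap, Finset.mul_sum, Finset.sum_mul, conjTranspose_mul, Matrix.mul_assoc]
      _ = 0 := by rw [hfix.eq, hP, Matrix.zero_mul]
  have hterm := (Finset.sum_eq_zero_iff_of_nonneg
    fun j _ => (hρ.mul_mul_conjTranspose_same (P * K j)).nonneg).mp hsum i (Finset.mem_univ i)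
  exact hρ.mul_eq_zero_of_mul_mul_conjTranspose_eq_zero hterm

theorem kraus_mul_proj_eq_of_isFixedPt [DecidableEq n] (K : ι → Matrix n n 𝕜)
    {ρ Q : Matrix n n 𝕜}
    (hρ : ρ.PosSemidef) (hfix : Function.IsFixedPt (krausMap K) ρ) (hQi : Q * Q = Q)
    (hQrange : LinearMap.range Q.mulVecLin = LinearMap.range ρ.mulVecLin) (i : ι) :
    Q * K i * Q = K i * Q := by
  have hρQ : (1 - Q) * ρ = 0 :=
    mul_eq_zero_of_range_mulVecLin_le hQrange.ge
      (by rw [Matrix.sub_mul, Matrix.one_mul, hQi, sub_self])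
  have hKQ := mul_eq_zero_of_range_mulVecLin_le hQrange.le
    (mul_kraus_mul_eq_zero_of_isFixedPt K hρ hfix hρQ i)
  rwa [Matrix.sub_mul, Matrix.sub_mul, Matrix.one_mul, sub_eq_zero, eq_comm] at hKQ

variable {K : ι → Matrix n n 𝕜} {Q : Matrix n n 𝕜}

theorem one_sub_mul_krausMap_eq_zero [DecidableEq n] (hinv : ∀ i, Q * K i * Q = K i * Q) :
    (1 - Q) * krausMap K Q = 0 := by
  simp only [krausMap, Finset.mul_sum, ← Matrix.mul_assoc, Matrix.sub_mul, Matrix.one_mul, hinv,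
    sub_self, Matrix.zero_mul, Finset.sum_const_zero]

theorem mul_krausMap_mul_eq_self (hQ : Q.IsHermitian) (hinv : ∀ i, Q * K i * Q = K i * Q)
    {σ : Matrix n n 𝕜} (hσ : Q * σ * Q = σ) :
    Q * krausMap K σ * Q = krausMap K σ := by
  have hterm (i : ι) : K i * σ * (K i)ᴴ = K i * Q * σ * (K i * Q)ᴴ := by
    conv_lhs => rw [← hσ]
    simp only [conjTranspose_mul, hQ.eq, Matrix.mul_assoc]
  simp only [krausMap, hterm, Finset.mul_sum, Finset.sum_mul]
  refine Finset.sum_congr rfl fun i _ => ?_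
  calc Q * (K i * Q * σ * (K i * Q)ᴴ) * Q = Q * K i * Q * σ * (Q * K i * Q)ᴴ := by
        simp only [conjTranspose_mul, hQ.eq, Matrix.mul_assoc]
    _ = K i * Q * σ * (K i * Q)ᴴ := by rw [hinv]

end Kraus

/-- Let `Φ` be a quantum channel, `ρ ≥ 0` with `Φ ρ = ρ`, and `Q` the
orthogonal projection onto the range (support) of `ρ`. Then `Tr[(1 − Q) Φ(Q)] = 0`, and
every `σ ≥ 0` supported inside `Q` (i.e. `Q σ Q = σ`) satisfies `Q Φ(σ) Q = Φ(σ)`. -/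
theorem channel_preserves_support
    {n : ℕ} (Φ : Matrix (Fin n) (Fin n) ℂ → Matrix (Fin n) (Fin n) ℂ)
    (hΦ : IsQChannel Φ)
    (ρ : Matrix (Fin n) (Fin n) ℂ) (hρ : ρ.PosSemidef) (hfix : Φ ρ = ρ)
    (Q : Matrix (Fin n) (Fin n) ℂ) (hQh : Q.IsHermitian) (hQi : Q * Q = Q)
    (hQrange : LinearMap.range Q.mulVecLin = LinearMap.range ρ.mulVecLin) :
    ((1 - Q) * Φ Q).trace = 0 ∧
    ∀ σ : Matrix (Fin n) (Fin n) ℂ, σ.PosSemidef → Q * σ * Q = σ →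
      Q * Φ σ * Q = Φ σ := by
  obtain ⟨N, K, hK, -⟩ := hΦ
  obtain rfl : Φ = krausMap K := funext hK
  have hinv := kraus_mul_proj_eq_of_isFixedPt K hρ hfix hQi hQrange
  exact ⟨by rw [one_sub_mul_krausMap_eq_zero hinv, trace_zero],
    fun σ _ hσ => mul_krausMap_mul_eq_self hQh hinv hσ⟩
end
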